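/- arXiv:math/0509467 — 3 statements merged into one kernel-verified Lean document; each statement's English description precedes it below -/
import Mathlib

section
/- Let G be an FC group. For every finite-dimensional unitary representation D : G → U(n), there exists a normal subgroup N of G of finite index such that D maps the commutator subgroup N' of N to the identity. -/
/-! The images `D g` span a finite-dimensional space of matrices, so finitely many of them,
`D g₁, …, D gₘ`, already span it. In an FC group the centralizer of `{g₁, …, gₘ}` has finite index,
and so does its normal core `N`. For `x ∈ N` the matrix `D x` commutes with every `D gᵢ`, hence with
their whole span, which contains `D(N)`; so `D(N)` is abelian and `D` kills `N'`. -/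

theorem Subgroup.finiteIndex_centralizer_singleton {G : Type*} [Group G] {g : G}
    (hg : (Set.range fun h : G => h * g * h⁻¹).Finite) : (centralizer {g}).FiniteIndex := by
  have horbit : MulAction.orbit (ConjAct G) g = Set.range fun h : G => h * g * h⁻¹ := by
    ext x
    rw [ConjAct.mem_orbit_conjAct, isConj_comm, isConj_iff, Set.mem_range]
  have : Finite (MulAction.orbit (ConjAct G) g) := horbit ▸ hg.to_subtype
  have : Finite (G ⧸ centralizer {g}) :=
    .of_equiv _ ((MulAction.orbitEquivQuotientStabilizer (ConjAct G) g).trans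
      (quotientEquivOfEq (ConjAct.stabilizer_eq_centralizer g)))
  exact finiteIndex_of_finite_quotient

theorem Subgroup.finiteIndex_centralizer {G : Type*} [Group G] {s : Set G} (hs : s.Finite)
    (hFC : ∀ g ∈ s, (Set.range fun h : G => h * g * h⁻¹).Finite) :
    (centralizer s).FiniteIndex := by
  have : Finite s := hs.to_subtype
  rw [centralizer_eq_iInf, iInf_subtype']
  exact finiteIndex_iInf fun g => finiteIndex_centralizer_singleton (hFC g g.2)

theorem exists_finset_centralizer_image_subset (k : Type*) {A ι : Type*} [Field k] [Ring A]
    [Algebra k A] [FiniteDimensional k A] (f : ι → A) :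
    ∃ t : Finset ι, (f '' t).centralizer ⊆ (Set.range f).centralizer := by
  classical
  obtain ⟨u, hu, -, hspan, -⟩ := Submodule.exists_finset_span_eq_linearIndepOn k (Set.range f)
  rw [← Set.image_univ, Finset.subset_set_image_iff] at hu
  obtain ⟨t, -, rfl⟩ := hu
  refine ⟨t, fun a ha => ?_⟩
  have hspan_le : Submodule.span k (Set.range f) ≤ (Subalgebra.centralizer k {a}).toSubmodule := by
    rw [← hspan, Submodule.span_le, Finset.coe_image]
    exact fun b hb c hc => (Set.mem_singleton_iff.mp hc ▸ Set.mem_centralizer_iff.mp ha b hb).symm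
  exact fun b hb => (hspan_le (Submodule.subset_span hb) a rfl).symm

theorem exists_normal_finiteIndex_forall_commute {G : Type*} (k : Type*) {A : Type*} [Group G]
    [Field k] [Ring A] [Algebra k A] [FiniteDimensional k A]
    (hFC : ∀ g : G, (Set.range fun h : G => h * g * h⁻¹).Finite) (ρ : G →* A) :
    ∃ N : Subgroup G, N.Normal ∧ N.FiniteIndex ∧ ∀ x ∈ N, ∀ g, Commute (ρ x) (ρ g) := by
  obtain ⟨t, ht⟩ := exists_finset_centralizer_image_subset k ρ
  have := Subgroup.finiteIndex_centralizer t.finite_toSet fun g _ => hFC g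
  refine ⟨(Subgroup.centralizer t).normalCore, inferInstance, inferInstance, fun x hx g => ?_⟩
  have hρx : ρ x ∈ (ρ '' t).centralizer := by
    rintro _ ⟨g, hg, rfl⟩
    exact Commute.map (Subgroup.mem_centralizer_iff.mp (Subgroup.normalCore_le _ hx) g hg) ρ
  exact (ht hρx (ρ g) ⟨g, rfl⟩).symm

theorem Subgroup.map_subtype_commutator_le_ker {G H : Type*} [Group G] [Group H]
    (N : Subgroup G) (φ : G →* H) (hN : ∀ x ∈ N, ∀ y ∈ N, Commute (φ x) (φ y)) :
    map N.subtype (_root_.commutator N) ≤ φ.ker := by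
  rw [_root_.commutator_def, map_commutator, commutator_le]
  rintro _ ⟨x, -, rfl⟩ _ ⟨y, -, rfl⟩
  rw [MonoidHom.mem_ker, map_commutatorElement, commutatorElement_eq_one_iff_commute]
  exact hN x x.2 y y.2

theorem stmt_1 {G : Type*} [Group G] (n : ℕ)
    (hFC : ∀ x : G, (Set.range fun h : G => h * x * h⁻¹).Finite)
    (D : G →* Matrix.unitaryGroup (Fin n) ℂ) :
    ∃ N : Subgroup G, N.Normal ∧ N.FiniteIndex ∧
      ∀ x ∈ Subgroup.map N.subtype (commutator ↥N), D x = 1 := by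
  obtain ⟨N, hN, hNfin, hcomm⟩ :=
    exists_normal_finiteIndex_forall_commute ℂ hFC ((Matrix.unitaryGroup (Fin n) ℂ).subtype.comp D)
  refine ⟨N, hN, hNfin, fun x hx => N.map_subtype_commutator_le_ker D ?_ hx⟩
  exact fun x hx y _ => Subtype.ext (hcomm x hx y)
end

section
/- Let G be an FC group and let N be a normal subgroup of finite index in G. Then the quotient G'/N' of the commutator subgroup G' by the commutator subgroup N' of N is finitely generated (as a group), where N' is normal in G. -/
/-!
Pass to `H = G ⧸ N'`. It is again FC, and `N ⧸ N'` is an abelian subgroup of finite index in it.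
An element of `N ⧸ N'` that also commutes with a (finite) set of coset representatives is
central, and in an FC group every centralizer of an element has finite index; hence the centre
of `H` has finite index. Commutators only depend on their arguments modulo the centre, so `H`
has finitely many commutators, and `H'` is finite by Schur's theorem. Finally `G' ⧸ N'` embeds
into `H'`.
-/

open Subgroup
open scoped commutatorElement

def IsFCGroup (G : Type*) [Group G] : Prop :=
  ∀ x : G, (Set.range fun h : G => h * x * h⁻¹).Finite

theorem commutatorElement_mul_mul_of_mem_center {G : Type*} [Group G] {z w : G}
    (hz : z ∈ center G) (hw : w ∈ center G) (a b : G) : ⁅a * z, b * w⁆ = ⁅a, b⁆ := by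
  rw [mem_center_iff] at hz hw
  rw [commutatorElement_mul_left_eq_conj_mul a z, commutatorElement_mul_right_eq_mul_conj a b w,
    commutatorElement_eq_one_iff_mul_comm.mpr (hz _).symm,
    commutatorElement_eq_one_iff_mul_comm.mpr (hw a)]
  group

theorem finite_commutatorSet_of_finiteIndex_center {G : Type*} [Group G]
    [(center G).FiniteIndex] : Finite (commutatorSet G) := by
  have : Finite (G ⧸ center G) := (center G).finite_quotient_of_finiteIndex
  refine Set.Finite.to_subtype ((Set.finite_range
    fun p : (G ⧸ center G) × (G ⧸ center G) => ⁅p.1.out, p.2.out⁆).subset ?_)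
  rintro _ ⟨g₁, g₂, rfl⟩
  obtain ⟨z₁, h₁⟩ := QuotientGroup.mk_out_eq_mul (center G) g₁
  obtain ⟨z₂, h₂⟩ := QuotientGroup.mk_out_eq_mul (center G) g₂
  exact ⟨(g₁, g₂), by simp only [h₁, h₂, commutatorElement_mul_mul_of_mem_center z₁.2 z₂.2]⟩

theorem Subgroup.finite_quotient_subgroupOf_of_finite_map {G : Type*} [Group G]
    (S K : Subgroup G) [K.Normal] [Finite (S.map (QuotientGroup.mk' K))] :
    Finite (S ⧸ K.subgroupOf S) := by
  let f := (QuotientGroup.mk' K).domRestrict S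
  have hker : f.ker = K.subgroupOf S := by rw [MonoidHom.ker_domRestrict, QuotientGroup.ker_mk']
  have : Finite f.range := by rwa [MonoidHom.domRestrict_range]
  rw [← hker]
  exact .of_equiv _ (QuotientGroup.quotientKerEquivRange f).toEquiv.symm

namespace IsFCGroup

variable {G : Type*} [Group G]

theorem of_surjective {H : Type*} [Group H] (hG : IsFCGroup G) {f : G →* H}
    (hf : Function.Surjective f) : IsFCGroup H := by
  intro y
  obtain ⟨x, rfl⟩ := hf y
  refine ((hG x).image f).subset ?_
  rintro _ ⟨h, rfl⟩
  obtain ⟨g, rfl⟩ := hf h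
  exact ⟨g * x * g⁻¹, ⟨g, rfl⟩, by simp⟩

theorem finiteIndex_centralizer (hG : IsFCGroup G) (x : G) : (centralizer {x}).FiniteIndex := by
  have horbit : MulAction.orbit (ConjAct G) x = Set.range fun h : G => h * x * h⁻¹ :=
    (ConjAct.ofConjAct.surjective.range_comp _).symm
  have hindex := index_comap_of_surjective (MulAction.stabilizer (ConjAct G) x)
    (f := ConjAct.toConjAct.toMonoidHom) ConjAct.toConjAct.surjective
  rw [MulAction.index_stabilizer, horbit] at hindex
  rw [centralizer_eq_comap_stabilizer]
  exact ⟨hindex.trans_ne ((Set.ncard_pos (hG x)).mpr ⟨x, 1, by simp⟩).ne'⟩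

theorem finiteIndex_center (hG : IsFCGroup G) (A : Subgroup G) [A.FiniteIndex]
    (hA : A ≤ centralizer A) : (center G).FiniteIndex := by
  have : Finite (G ⧸ A) := A.finite_quotient_of_finiteIndex
  have := finiteIndex_iInf fun q : G ⧸ A => hG.finiteIndex_centralizer q.out
  refine finiteIndex_of_le (H := A ⊓ ⨅ q : G ⧸ A, centralizer {q.out}) ?_
  rintro z ⟨hzA, hzC⟩
  rw [mem_center_iff]
  intro g
  obtain ⟨a, hout⟩ := QuotientGroup.mk_out_eq_mul A g
  have hz_out : Commute z (g * a) := by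
    rw [← hout]
    exact mem_centralizer_singleton_iff.mp (mem_iInf.mp hzC (g : G ⧸ A))
  have hz_a : Commute z a := mem_centralizer_iff.mp (hA a.2) z hzA
  simpa using (hz_out.mul_right hz_a.inv_right).symm.eq

theorem finite_commutator (hG : IsFCGroup G) (A : Subgroup G) [A.FiniteIndex]
    (hA : A ≤ centralizer A) : Finite (commutator G) :=
  have := hG.finiteIndex_center A hA
  have := finite_commutatorSet_of_finiteIndex_center (G := G)
  inferInstance

end IsFCGroup

theorem stmt_2 {G : Type*} [Group G]
    (hFC : ∀ x : G, (Set.range fun h : G => h * x * h⁻¹).Finite)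
    (N : Subgroup G) [N.Normal] [N.FiniteIndex]
    [((Subgroup.map N.subtype (commutator ↥N)).subgroupOf (commutator G)).Normal] :
    Group.FG
      (↥(commutator G) ⧸ ((Subgroup.map N.subtype (commutator ↥N)).subgroupOf (commutator G))) := by
  suffices Finite (commutator G ⧸ ((commutator N).map N.subtype).subgroupOf (commutator G)) from
    inferInstance
  rw [N.map_subtype_commutator]
  set π := QuotientGroup.mk' ⁅N, N⁆
  have hπ : Function.Surjective π := QuotientGroup.mk'_surjective _
  have : (N.map π).FiniteIndex := ⟨by
    rw [index_map_eq N hπ (by rw [QuotientGroup.ker_mk']; exact N.commutator_le_self)]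
    exact FiniteIndex.index_ne_zero⟩
  have hab : N.map π ≤ centralizer (N.map π) := by
    rw [← commutator_eq_bot_iff_le_centralizer, ← map_commutator, Subgroup.map_eq_bot_iff,
      QuotientGroup.ker_mk']
  have := (IsFCGroup.of_surjective hFC hπ).finite_commutator _ hab
  have : Finite ((commutator G).map π) := by
    rwa [map_commutator_eq, MonoidHom.range_eq_top.mpr hπ]
  exact finite_quotient_subgroupOf_of_finite_map _ _
end

section
/- A finitely generated torsion FC group is finite. -/
/-!
An element with finitely many conjugates has a centralizer of finite index (orbit–stabilizer for
conjugation), so the center, being the intersection of the centralizers of finitely many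
generators, has finite index. By Schreier's lemma the center is then finitely generated; as a
finitely generated torsion abelian group it is finite, and hence so is the whole group.
-/

namespace Subgroup

variable {G : Type*} [Group G]

theorem finiteIndex_centralizer_singleton_s4 {x : G}
    (hx : (Set.range fun g : G => g * x * g⁻¹).Finite) : (centralizer {x}).FiniteIndex := by
  have horbit : MulAction.orbit (ConjAct G) x ⊆ Set.range fun g : G => g * x * g⁻¹ := by
    rintro _ ⟨g, rfl⟩
    exact ⟨ConjAct.ofConjAct g, rfl⟩
  constructor
  rw [centralizer_eq_comap_stabilizer]
  refine (index_comap_of_surjective _ ConjAct.toConjAct.surjective).trans_ne ?_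
  rw [MulAction.index_stabilizer]
  exact Set.ncard_ne_zero_of_mem (MulAction.mem_orbit_self x) (hx.subset horbit)

theorem finiteIndex_center_of_closure_eq_top {s : Set G} (hs : closure s = ⊤) (hfin : s.Finite)
    (hconj : ∀ x ∈ s, (Set.range fun g : G => g * x * g⁻¹).Finite) : (center G).FiniteIndex := by
  have := hfin.to_subtype
  rw [center_eq_infi' hs]
  exact finiteIndex_iInf fun x => finiteIndex_centralizer_singleton_s4 (hconj x x.2)

end Subgroup

open scoped IsMulCommutative in
theorem Group.finite_of_fg_of_isMulTorsion_of_finiteIndex_center {G : Type*} [Group G]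
    [Group.FG G] (hG : IsMulTorsion G) [(Subgroup.center G).FiniteIndex] : Finite G := by
  have : Finite (Subgroup.center G) := CommGroup.finite_of_fg_isMulTorsion _ (hG.subgroup _)
  exact (Subgroup.finite_iff_finite_and_finiteIndex (Subgroup.center G)).mpr ⟨this, inferInstance⟩

theorem stmt_4 {G : Type*} [Group G]
    (hFC : ∀ x : G, (Set.range fun h : G => h * x * h⁻¹).Finite)
    (htor : Monoid.IsTorsion G) (hfg : Group.FG G) :
    Finite G := by
  obtain ⟨S, hS⟩ := hfg.out
  have := Subgroup.finiteIndex_center_of_closure_eq_top hS S.finite_toSet fun x _ => hFC x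
  exact Group.finite_of_fg_of_isMulTorsion_of_finiteIndex_center htor
end
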